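/- The canonical (greedy) multitableau has non-positive degree. Let ρ = ((i_1,j_1),…,(i_s,j_s)) be a sequence with i_r ≥ 1 and 1 ≤ j_r ≤ n for which the greedy algorithm succeeds, and let T_c = T_c(ρ) be the resulting standard n-multitableau. Then for every r, the contribution deg(T_c^r) of the entry r to the Brundan–Kleshchev–Wang degree satisfies deg(T_c^r) ≤ 0; in particular deg_BKW(T_c) ≤ 0. -/

import Mathlib

open scoped Classical

namespace SlnWebGreedy

noncomputable section

/-- `p r` is the length of the `r`-th row (0-indexed) of a Young diagram. -/
def IsPartition (p : ℕ → ℕ) : Prop :=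
  Antitone p ∧ ∃ N, p N = 0

/-- The 0-indexed cell `(r, c)` lies in the Young diagram of `p`. -/
def InDiag (p : ℕ → ℕ) (r c : ℕ) : Prop :=
  c < p r

/-- Residue (with shift `ℓ`) of the 0-indexed cell `(r, c)`; for the
corresponding 1-indexed cell `(r+1, c+1)` this is `(c+1) - (r+1) + ℓ`. -/
def resOf (ℓ : ℕ) (r c : ℕ) : ℤ :=
  (c : ℤ) - (r : ℤ) + (ℓ : ℤ)

/-- `(r, c)` (0-indexed) is an addable cell of `p`. -/
def IsAddableCell (p : ℕ → ℕ) (r c : ℕ) : Prop :=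
  c = p r ∧ (r = 0 ∨ p r < p (r - 1))

/-- `(r, c)` (0-indexed) is a removable cell of `p`. -/
def IsRemovableCell (p : ℕ → ℕ) (r c : ℕ) : Prop :=
  c + 1 = p r ∧ p (r + 1) < p r

/-- Add to `p` its (unique) addable cell of residue `k`, if there is one. -/
def addRes (ℓ : ℕ) (p : ℕ → ℕ) (k : ℤ) : ℕ → ℕ :=
  if h : ∃ r, (r = 0 ∨ p r < p (r - 1)) ∧ (p r : ℤ) - (r : ℤ) + (ℓ : ℤ) = k then
    Function.update p h.choose (p h.choose + 1)
  else p

/-- A multitableau: `shape t r` is the length of the `r`-th row (0-indexed) of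
the `t`-th component (components are indexed by `t ∈ {1,…,n}`), and
`entry t r c` is the entry of the 0-indexed cell `(r, c)` of the `t`-th
component; everything is normalised to `0` outside of the diagrams. -/
structure MultiTableau where
  shape : ℕ → ℕ → ℕ
  entry : ℕ → ℕ → ℕ → ℕ

/-- A standard `n`-multitableau with entries in `{1,…,s}` (residue shift `ℓ`). -/
def IsStandard (n ℓ s : ℕ) (M : MultiTableau) : Prop :=
  (∀ t, IsPartition (M.shape t)) ∧
  (∀ t, (t = 0 ∨ n < t) → ∀ r, M.shape t r = 0) ∧
  (∀ t r c, InDiag (M.shape t) r c → 1 ≤ M.entry t r c ∧ M.entry t r c ≤ s) ∧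
  (∀ t r c, ¬ InDiag (M.shape t) r c → M.entry t r c = 0) ∧
  (∀ t r c c', c < c' → InDiag (M.shape t) r c' → M.entry t r c < M.entry t r c') ∧
  (∀ t r r' c, r < r' → InDiag (M.shape t) r' c → M.entry t r c < M.entry t r' c) ∧
  (∀ t r c r' c', InDiag (M.shape t) r c → InDiag (M.shape t) r' c' →
    M.entry t r c = M.entry t r' c' → r = r' ∧ c = c') ∧
  (∀ t r c t' r' c', InDiag (M.shape t) r c → InDiag (M.shape t') r' c' →
    M.entry t r c = M.entry t' r' c' → resOf ℓ r c = resOf ℓ r' c')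

/-- Add, for every component `t ∈ Tset`, the (unique) addable cell of residue
`k` of that component, giving each of the new cells the entry `e`. -/
def stepAdd (ℓ : ℕ) (k : ℤ) (e : ℕ) (Tset : Finset ℕ) (M : MultiTableau) :
    MultiTableau where
  shape := fun t => if t ∈ Tset then addRes ℓ (M.shape t) k else M.shape t
  entry := fun t r c =>
    if t ∈ Tset ∧ M.shape t r ≤ c ∧ c < addRes ℓ (M.shape t) k r then e
    else M.entry t r c

/-- The components of `M` (among `{1,…,n}`) containing a node with entry `j`. -/
def compsWith (n : ℕ) (M : MultiTableau) (j : ℕ) : Finset ℕ :=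
  (Finset.Icc 1 n).filter fun t => ∃ r c, InDiag (M.shape t) r c ∧ M.entry t r c = j

/-- The shape of `M` with all entries `> j` removed, where moreover in the
components outside `Keep` the nodes with entry `j` are removed as well. -/
def shapeTrunc (M : MultiTableau) (j : ℕ) (Keep : Finset ℕ) : ℕ → ℕ → ℕ :=
  fun t r =>
    ((Finset.range (M.shape t r)).filter fun c =>
      M.entry t r c ≤ (if t ∈ Keep then j else j - 1)).card

/-- The row of the node with entry `j` in component `t` of `M`. -/
def nodeRow (M : MultiTableau) (j t : ℕ) : ℕ :=
  if h : ∃ r c, InDiag (M.shape t) r c ∧ M.entry t r c = j then h.choose else 0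

/-- The column of the node with entry `j` in component `t` of `M`. -/
def nodeCol (M : MultiTableau) (j t : ℕ) : ℕ :=
  if h : ∃ r c, InDiag (M.shape t) r c ∧ M.entry t r c = j then
    h.choose_spec.choose
  else 0

/-- The number of addable nodes of `sh` of residue `ρ` lying strictly after the
position `(t, r)` in the order `⪯` (at most one addable node of a given residue
per component). -/
def cntAddAfter (n ℓ : ℕ) (sh : ℕ → ℕ → ℕ) (ρ : ℤ) (t r : ℕ) : ℕ :=
  ((Finset.Icc 1 n).filter fun t' => ∃ r' c', IsAddableCell (sh t') r' c' ∧
    resOf ℓ r' c' = ρ ∧ (t' < t ∨ (t' = t ∧ r < r'))).card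

/-- The number of removable nodes of `sh` of residue `ρ` lying strictly after
the position `(t, r)` in the order `⪯`. -/
def cntRemAfter (n ℓ : ℕ) (sh : ℕ → ℕ → ℕ) (ρ : ℤ) (t r : ℕ) : ℕ :=
  ((Finset.Icc 1 n).filter fun t' => ∃ r' c', IsRemovableCell (sh t') r' c' ∧
    resOf ℓ r' c' = ρ ∧ (t' < t ∨ (t' = t ∧ r < r'))).card

/-- The contribution `deg(Tʲ)` of the entry `j` to the Brundan–Kleshchev–Wang
degree of the standard multitableau `M`: listing the nodes with entry `j` as
`N₁ ≺ ⋯ ≺ N_t` (i.e. by decreasing component index), it is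
`Σ_p (A_p − R_p) − t(t−1)/2`, where `A_p` (resp. `R_p`) is the number of
addable (resp. removable) nodes of the residue of `N_p`, strictly after `N_p`,
of the multipartition underlying `Tʲ` with the nodes `N_{p+1},…,N_t` removed. -/
def degStep (n ℓ : ℕ) (M : MultiTableau) (j : ℕ) : ℤ :=
  (∑ t ∈ compsWith n M j,
    ((cntAddAfter n ℓ (shapeTrunc M j ((compsWith n M j).filter fun t' => t ≤ t'))
        (resOf ℓ (nodeRow M j t) (nodeCol M j t)) t (nodeRow M j t) : ℤ) -
      (cntRemAfter n ℓ (shapeTrunc M j ((compsWith n M j).filter fun t' => t ≤ t'))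
        (resOf ℓ (nodeRow M j t) (nodeCol M j t)) t (nodeRow M j t) : ℤ))) -
  (((compsWith n M j).card * ((compsWith n M j).card - 1) / 2 : ℕ) : ℤ)

/-- The Brundan–Kleshchev–Wang degree of a standard multitableau with entries
in `{1,…,s}`. -/
def degBKW (n ℓ s : ℕ) (M : MultiTableau) : ℤ :=
  ∑ j ∈ Finset.Icc 1 s, degStep n ℓ M j

/-- The set of indices `t ∈ {1,…,n}` of components of `M` possessing an addable
node of residue `ρ`. -/
def addableComps (n ℓ : ℕ) (M : MultiTableau) (ρ : ℤ) : Finset ℕ :=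
  (Finset.Icc 1 n).filter fun t =>
    ∃ r c, IsAddableCell (M.shape t) r c ∧ resOf ℓ r c = ρ

/-- The `j` smallest elements of a finite set of naturals. -/
def takeMin (A : Finset ℕ) (j : ℕ) : Finset ℕ :=
  ((A.sort (· ≤ ·)).take j).toFinset

/-- The intermediate multitableaux of the greedy algorithm for the sequence
`ρ = ((i_1,j_1),…,(i_s,j_s))` (`i_r = res r`, `j_r = mult r`): at step `r`,
nodes with entry `r` are added at the addable nodes of residue `i_r` of the
`j_r` smallest-index components possessing one (the rightmost possible
positions). -/
def greedyAux (n ℓ : ℕ) {s : ℕ} (res mult : Fin s → ℕ) : ℕ → MultiTableau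
  | 0 => ⟨fun _ _ => 0, fun _ _ _ => 0⟩
  | r + 1 =>
    if h : r < s then
      stepAdd ℓ (res ⟨r, h⟩ : ℤ) (r + 1)
        (takeMin (addableComps n ℓ (greedyAux n ℓ res mult r) (res ⟨r, h⟩ : ℤ))
          (mult ⟨r, h⟩))
        (greedyAux n ℓ res mult r)
    else greedyAux n ℓ res mult r

/-- The canonical (greedy) multitableau `T_c(ρ)`. -/
def greedyTab (n ℓ : ℕ) {s : ℕ} (res mult : Fin s → ℕ) : MultiTableau :=
  greedyAux n ℓ res mult s

/-- The greedy algorithm succeeds: at every step `r` there are at least `j_r`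
components possessing an addable node of residue `i_r`. -/
def GreedySucceeds (n ℓ : ℕ) {s : ℕ} (res mult : Fin s → ℕ) : Prop :=
  ∀ r : Fin s,
    mult r ≤ (addableComps n ℓ (greedyAux n ℓ res mult r.val) (res r : ℤ)).card

/-- `M` has residue sequence `ρ = ((i_1,j_1),…,(i_s,j_s))`: for each `r`,
exactly `j_r` nodes carry the entry `r` (equivalently, under standardness,
`j_r` components contain the entry `r`) and they all have residue `i_r`. -/
def HasResSeqRM (n ℓ : ℕ) {s : ℕ} (res mult : Fin s → ℕ) (M : MultiTableau) :
    Prop :=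
  ∀ r : Fin s,
    (compsWith n M (r.val + 1)).card = mult r ∧
    ∀ t r' c, InDiag (M.shape t) r' c → M.entry t r' c = r.val + 1 →
      resOf ℓ r' c = (res r : ℤ)

/-- The number of nodes of the partition `p`. -/
def psize (p : ℕ → ℕ) : ℕ :=
  if h : ∃ N, p N = 0 then ∑ r ∈ Finset.range (Nat.find h), p r else 0

/-- The shape of the multitableau obtained from `M` by removing all nodes with
entries `> j`. -/
def shapeUpTo (M : MultiTableau) (j : ℕ) : ℕ → ℕ → ℕ :=
  fun t r => ((Finset.range (M.shape t r)).filter fun c => M.entry t r c ≤ j).card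

/-- The dominance order on `n`-multipartitions: `λ ⊴ μ` iff for every
`i ∈ {1,…,n}` and every `a ≥ 0`,
`Σ_{i′ > i} |λ_{i′}| + Σ_{b=1}^{a} (λ_i)_b ≤ Σ_{i′ > i} |μ_{i′}| + Σ_{b=1}^{a} (μ_i)_b`. -/
def MPDomLE (n : ℕ) (lam mu : ℕ → ℕ → ℕ) : Prop :=
  ∀ i, 1 ≤ i → i ≤ n → ∀ a : ℕ,
    ((∑ i' ∈ Finset.Ioc i n, psize (lam i')) + ∑ b ∈ Finset.range a, lam i b) ≤
      (∑ i' ∈ Finset.Ioc i n, psize (mu i')) + ∑ b ∈ Finset.range a, mu i b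

/-- The dominance order on standard multitableaux: `T ⊴ T′` iff
`shape(Tʲ) ⊴ shape(T′ʲ)` for all `j`. -/
def TabDomLE (n : ℕ) (M M' : MultiTableau) : Prop :=
  ∀ j : ℕ, MPDomLE n (shapeUpTo M j) (shapeUpTo M' j)

/-!
At step `r` the greedy algorithm places the entry `r` in the `j_r` smallest components having an
addable node of residue `i_r`. Filling that node leaves its component without addable `i_r`-nodes,
since contents strictly decrease down a partition. A component `t' < t` which still has an
addable `i_r`-node when the node in component `t` is counted was untouched at step `r`, so it was
a candidate, and it was chosen because `t` was. Hence the `p`-th node has `A_p ≤ p - 1`, and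
`Σ_p (A_p - R_p) ≤ t(t-1)/2`.
-/

open Finset

section Partition

variable {ℓ : ℕ} {p : ℕ → ℕ} {k : ℤ}

lemma content_strictAnti (hp : Antitone p) : StrictAnti fun a => (p a : ℤ) - a := by
  intro a b hab
  have := hp hab.le
  simp only
  omega

lemma exists_addable_iff :
    (∃ a c, IsAddableCell p a c ∧ resOf ℓ a c = k) ↔
      ∃ a, (a = 0 ∨ p a < p (a - 1)) ∧ (p a : ℤ) - a + ℓ = k := by
  constructor
  · rintro ⟨a, _, ⟨rfl, ha⟩, hres⟩
    exact ⟨a, ha, hres⟩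
  · rintro ⟨a, ha, hres⟩
    exact ⟨a, p a, ⟨rfl, ha⟩, hres⟩

lemma le_addRes (a : ℕ) : p a ≤ addRes ℓ p k a := by
  unfold addRes
  split_ifs with h
  · rcases eq_or_ne a h.choose with rfl | ha
    · simp
    · rw [Function.update_of_ne ha]
  · exact le_rfl

lemma exists_lt_addRes_iff :
    (∃ a, p a < addRes ℓ p k a) ↔ ∃ a c, IsAddableCell p a c ∧ resOf ℓ a c = k := by
  rw [exists_addable_iff]
  unfold addRes
  split_ifs with h
  · exact iff_of_true ⟨h.choose, by simp⟩ h
  · simp only [lt_self_iff_false, exists_false, h]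

lemma resOf_of_lt_addRes {a c : ℕ} (hc : p a ≤ c) (hc' : c < addRes ℓ p k a) :
    resOf ℓ a c = k := by
  unfold addRes at hc'
  split_ifs at hc' with h
  · rcases eq_or_ne a h.choose with rfl | ha
    · rw [Function.update_self] at hc'
      rw [resOf, show c = p h.choose by omega]
      exact h.choose_spec.2
    · rw [Function.update_of_ne ha] at hc'
      omega
  · omega

lemma addRes_antitone (hp : Antitone p) : Antitone (addRes ℓ p k) := by
  unfold addRes
  split_ifs with h
  · obtain ⟨hr₀, -⟩ := h.choose_spec
    set r₀ := h.choose
    intro a b hab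
    simp only [Function.update_apply]
    split_ifs with hb ha
    · exact le_rfl
    · -- the row `r₀ = b` that grew was shorter than the row `a` above it
      have := hp (show a ≤ r₀ - 1 by omega)
      have := hr₀.resolve_left (by omega)
      omega
    · have : p b ≤ p r₀ := hp (by omega)
      omega
    · exact hp hab
  · exact hp

lemma not_addable_addRes (hp : Antitone p) :
    ¬ ∃ a c, IsAddableCell (addRes ℓ p k) a c ∧ resOf ℓ a c = k := by
  rw [exists_addable_iff]
  rintro ⟨a, ha, hres⟩
  unfold addRes at ha hres
  split_ifs at ha hres with h
  · have hk := h.choose_spec.2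
    rcases lt_trichotomy a h.choose with hlt | rfl | hgt
    · rw [Function.update_of_ne hlt.ne] at hres
      have := content_strictAnti hp hlt
      simp only at this
      omega
    · rw [Function.update_self] at hres
      omega
    · rw [Function.update_of_ne hgt.ne'] at hres
      have := content_strictAnti hp hgt
      simp only at this
      omega
  · exact h ⟨a, ha, hres⟩

end Partition

section StepAdd

variable {ℓ : ℕ} {k : ℤ} {e : ℕ} {T : Finset ℕ} {M : MultiTableau} {t a c : ℕ}

lemma stepAdd_empty : stepAdd ℓ k e ∅ M = M := by
  cases M
  simp [stepAdd]

lemma stepAdd_shape_antitone (h : Antitone (M.shape t)) :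
    Antitone ((stepAdd ℓ k e T M).shape t) := by
  simp only [stepAdd]
  split_ifs
  exacts [addRes_antitone h, h]

lemma shape_le_stepAdd_shape : M.shape t a ≤ (stepAdd ℓ k e T M).shape t a := by
  simp only [stepAdd]
  split_ifs
  exacts [le_addRes a, le_rfl]

lemma stepAdd_entry_of_lt (hc : c < M.shape t a) :
    (stepAdd ℓ k e T M).entry t a c = M.entry t a c :=
  if_neg fun h => (h.2.1.trans_lt hc).false

lemma stepAdd_entry_of_le (hc : M.shape t a ≤ c) (hc' : c < (stepAdd ℓ k e T M).shape t a) :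
    (stepAdd ℓ k e T M).entry t a c = e := by
  simp only [stepAdd] at hc' ⊢
  split_ifs at hc' with ht
  · exact if_pos ⟨ht, hc, hc'⟩
  · omega

end StepAdd

section TakeMin

variable {A : Finset ℕ} {j x y : ℕ}

lemma takeMin_subset : takeMin A j ⊆ A := fun x hx => by
  rw [takeMin, List.mem_toFinset] at hx
  exact (mem_sort _).mp (List.take_subset j _ hx)

lemma mem_takeMin_of_le (hx : x ∈ A) (hy : y ∈ takeMin A j) (hxy : x ≤ y) : x ∈ takeMin A j := by
  rw [takeMin, List.mem_toFinset] at hy ⊢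
  by_contra hx'
  have hsorted := A.pairwise_sort (· ≤ ·)
  rw [← List.take_append_drop j (A.sort (· ≤ ·))] at hsorted
  have hxd : x ∈ (A.sort (· ≤ ·)).drop j := by
    have := (mem_sort (· ≤ ·)).mpr hx
    rw [← List.take_append_drop j (A.sort (· ≤ ·)), List.mem_append] at this
    exact this.resolve_left hx'
  have hyx : y ≤ x := (List.pairwise_append.mp hsorted).2.2 y hy x hxd
  exact hx' (le_antisymm hxy hyx ▸ hy)

end TakeMin

lemma sum_card_filter_lt {α : Type*} [LinearOrder α] (S : Finset α) :
    ∑ t ∈ S, #{t' ∈ S | t' < t} = ∑ i ∈ range #S, i := by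
  induction S using Finset.induction_on_max with
  | empty => simp
  | insert a S ha ih =>
    have haS : a ∉ S := fun h => (ha a h).false
    rw [sum_insert haS, card_insert_of_notMem haS, sum_range_succ, ← ih, add_comm]
    congr 1
    · refine sum_congr rfl fun t ht => ?_
      rw [filter_insert, if_neg (ha t ht).asymm]
    · rw [filter_insert, if_neg (lt_irrefl a), filter_true_of_mem ha]

lemma nodeRow_nodeCol_spec {M : MultiTableau} {j t : ℕ}
    (h : ∃ r c, InDiag (M.shape t) r c ∧ M.entry t r c = j) :
    InDiag (M.shape t) (nodeRow M j t) (nodeCol M j t) ∧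
      M.entry t (nodeRow M j t) (nodeCol M j t) = j := by
  rw [nodeRow, nodeCol, dif_pos h, dif_pos h]
  exact h.choose_spec.choose_spec

lemma degStep_nonpos_of_cntAddAfter_le {n ℓ j : ℕ} {M : MultiTableau}
    (h : ∀ t ∈ compsWith n M j,
      cntAddAfter n ℓ (shapeTrunc M j {t' ∈ compsWith n M j | t ≤ t'})
        (resOf ℓ (nodeRow M j t) (nodeCol M j t)) t (nodeRow M j t) ≤
      #{t' ∈ compsWith n M j | t' < t}) :
    degStep n ℓ M j ≤ 0 := by
  have hsum : ∑ t ∈ compsWith n M j, #{t' ∈ compsWith n M j | t' < t} =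
      #(compsWith n M j) * (#(compsWith n M j) - 1) / 2 := by
    rw [sum_card_filter_lt, sum_range_id]
  rw [degStep, sub_nonpos, ← hsum]
  push_cast
  gcongr with t ht
  exact (sub_le_self _ (Nat.cast_nonneg _)).trans (by exact_mod_cast h t ht)

section Greedy

variable {n ℓ s : ℕ} {res mult : Fin s → ℕ}

local notation "𝒢" => greedyAux n ℓ res mult

variable (n ℓ res mult) in
def greedyStepComps (r : Fin s) : Finset ℕ :=
  takeMin (addableComps n ℓ (𝒢 r) (res r)) (mult r)

lemma greedyAux_succ_of_lt (r : Fin s) :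
    𝒢 (r + 1) = stepAdd ℓ (res r) (r + 1) (greedyStepComps n ℓ res mult r) (𝒢 r) := by
  rw [greedyAux, dif_pos r.isLt]
  rfl

variable (n ℓ res mult) in
lemma exists_greedyAux_succ_eq_stepAdd (r : ℕ) :
    ∃ k T, 𝒢 (r + 1) = stepAdd ℓ k (r + 1) T (𝒢 r) := by
  by_cases hr : r < s
  · exact ⟨_, _, greedyAux_succ_of_lt ⟨r, hr⟩⟩
  · refine ⟨0, ∅, ?_⟩
    rw [stepAdd_empty, greedyAux, dif_neg hr]

lemma greedyAux_shape_antitone (r t : ℕ) : Antitone ((𝒢 r).shape t) := by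
  induction r with
  | zero => exact fun _ _ _ => le_rfl
  | succ r ih =>
    obtain ⟨k, T, h⟩ := exists_greedyAux_succ_eq_stepAdd n ℓ res mult r
    rw [h]
    exact stepAdd_shape_antitone ih

lemma greedyAux_shape_mono (t a : ℕ) : Monotone fun r => (𝒢 r).shape t a :=
  monotone_nat_of_le_succ fun r => by
    obtain ⟨k, T, h⟩ := exists_greedyAux_succ_eq_stepAdd n ℓ res mult r
    show (𝒢 r).shape t a ≤ (𝒢 (r + 1)).shape t a
    rw [h]
    exact shape_le_stepAdd_shape

lemma greedyAux_entry_le (r t a c : ℕ) : (𝒢 r).entry t a c ≤ r := by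
  induction r with
  | zero => exact le_rfl
  | succ r ih =>
    obtain ⟨k, T, h⟩ := exists_greedyAux_succ_eq_stepAdd n ℓ res mult r
    rw [h]
    simp only [stepAdd]
    split_ifs
    exacts [le_rfl, ih.trans r.le_succ]

lemma greedyAux_entry_le_iff {j r t a c : ℕ} (hjr : j ≤ r) (hc : c < (𝒢 r).shape t a) :
    (𝒢 r).entry t a c ≤ j ↔ c < (𝒢 j).shape t a := by
  induction r, hjr using Nat.le_induction with
  | base => exact iff_of_true (greedyAux_entry_le j t a c) hc
  | succ r hjr ih =>
    obtain ⟨k, T, h⟩ := exists_greedyAux_succ_eq_stepAdd n ℓ res mult r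
    rw [h] at hc ⊢
    by_cases hcr : c < (𝒢 r).shape t a
    · rw [stepAdd_entry_of_lt hcr]
      exact ih hcr
    · have : (𝒢 j).shape t a ≤ (𝒢 r).shape t a := greedyAux_shape_mono t a hjr
      rw [stepAdd_entry_of_le (not_lt.mp hcr) hc]
      omega

lemma shapeTrunc_greedyAux {j : ℕ} (hj : j ≤ s) (keep : Finset ℕ) (t : ℕ) :
    shapeTrunc (𝒢 s) j keep t = (𝒢 (if t ∈ keep then j else j - 1)).shape t := by
  funext a
  obtain ⟨b, hb, hbdef⟩ : ∃ b ≤ s, b = if t ∈ keep then j else j - 1 :=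
    ⟨_, by split_ifs <;> omega, rfl⟩
  rw [shapeTrunc, ← hbdef, ← card_range ((𝒢 b).shape t a)]
  congr 1
  ext c
  simp only [mem_filter, mem_range]
  constructor
  · rintro ⟨hc, hle⟩
    exact (greedyAux_entry_le_iff hb hc).mp hle
  · intro hc
    have hc' := hc.trans_le (greedyAux_shape_mono t a hb)
    exact ⟨hc', (greedyAux_entry_le_iff hb hc').mpr hc⟩

lemma greedyAux_entry_eq_succ_iff (r : Fin s) {t a c : ℕ} :
    (c < (𝒢 s).shape t a ∧ (𝒢 s).entry t a c = r + 1) ↔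
      (𝒢 r).shape t a ≤ c ∧ c < (𝒢 (r + 1)).shape t a := by
  have hr := r.isLt
  constructor
  · rintro ⟨hc, he⟩
    have h₁ := (greedyAux_entry_le_iff hr.le hc).not.mp (by omega)
    have h₂ := (greedyAux_entry_le_iff hr hc).mp he.le
    exact ⟨not_lt.mp h₁, h₂⟩
  · rintro ⟨h₁, h₂⟩
    have hc := h₂.trans_le (greedyAux_shape_mono t a hr)
    have := (greedyAux_entry_le_iff hr.le hc).not.mpr h₁.not_gt
    have := (greedyAux_entry_le_iff hr hc).mpr h₂
    exact ⟨hc, by omega⟩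

lemma compsWith_greedyAux (r : Fin s) :
    compsWith n (𝒢 s) (r + 1) = greedyStepComps n ℓ res mult r := by
  ext t
  simp only [compsWith, mem_filter, InDiag, greedyAux_entry_eq_succ_iff, greedyAux_succ_of_lt,
    stepAdd]
  split_ifs with ht
  · have htA := takeMin_subset ht
    rw [addableComps, mem_filter, ← exists_lt_addRes_iff] at htA
    obtain ⟨htI, a, ha⟩ := htA
    exact iff_of_true ⟨htI, a, _, le_rfl, ha⟩ ht
  · simp only [ht, iff_false, not_and, not_exists]
    intro _ a c h₁ h₂
    omega

lemma resOf_eq_of_greedyAux_entry_eq (r : Fin s) {t a c : ℕ}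
    (hc : c < (𝒢 s).shape t a) (he : (𝒢 s).entry t a c = r + 1) : resOf ℓ a c = res r := by
  obtain ⟨h₁, h₂⟩ := (greedyAux_entry_eq_succ_iff r).mp ⟨hc, he⟩
  simp only [greedyAux_succ_of_lt, stepAdd] at h₂
  split_ifs at h₂
  · exact resOf_of_lt_addRes h₁ h₂
  · omega

lemma not_addable_greedyAux_succ (r : Fin s) {t : ℕ} (ht : t ∈ greedyStepComps n ℓ res mult r) :
    ¬ ∃ a c, IsAddableCell ((𝒢 (r + 1)).shape t) a c ∧ resOf ℓ a c = res r := by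
  simp only [greedyAux_succ_of_lt, stepAdd, if_pos ht]
  exact not_addable_addRes (greedyAux_shape_antitone r t)

lemma cntAddAfter_greedyAux_le (r : Fin s) {t : ℕ} (ht : t ∈ compsWith n (𝒢 s) (r + 1)) :
    cntAddAfter n ℓ (shapeTrunc (𝒢 s) (r + 1) {t' ∈ compsWith n (𝒢 s) (r + 1) | t ≤ t'})
        (resOf ℓ (nodeRow (𝒢 s) (r + 1) t) (nodeCol (𝒢 s) (r + 1) t)) t
        (nodeRow (𝒢 s) (r + 1) t) ≤
      #{t' ∈ compsWith n (𝒢 s) (r + 1) | t' < t} := by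
  obtain ⟨hnode, hentry⟩ := nodeRow_nodeCol_spec (mem_filter.mp ht).2
  rw [resOf_eq_of_greedyAux_entry_eq r hnode hentry, cntAddAfter]
  refine card_le_card fun t' ht' => ?_
  obtain ⟨ht'I, a, c, hadd, hres, hlt | ⟨rfl, -⟩⟩ := mem_filter.mp ht'
  · rw [shapeTrunc_greedyAux r.isLt, if_neg (by rw [mem_filter]; omega), Nat.succ_sub_one] at hadd
    rw [compsWith_greedyAux] at ht ⊢
    have hA : t' ∈ addableComps n ℓ (𝒢 r) (res r) := mem_filter.mpr ⟨ht'I, a, c, hadd, hres⟩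
    exact mem_filter.mpr ⟨mem_takeMin_of_le hA ht hlt.le, hlt⟩
  · rw [shapeTrunc_greedyAux r.isLt, if_pos (mem_filter.mpr ⟨ht, le_rfl⟩)] at hadd
    rw [compsWith_greedyAux] at ht
    exact absurd ⟨a, c, hadd, hres⟩ (not_addable_greedyAux_succ r ht)

end Greedy

theorem greedy_deg_nonpos_general (n ℓ : ℕ) (s : ℕ) (res mult : Fin s → ℕ) :
    (∀ r : Fin s, degStep n ℓ (greedyTab n ℓ res mult) (r.val + 1) ≤ 0) ∧
    degBKW n ℓ s (greedyTab n ℓ res mult) ≤ 0 := by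
  have hstep (r : Fin s) : degStep n ℓ (greedyTab n ℓ res mult) (r.val + 1) ≤ 0 :=
    degStep_nonpos_of_cntAddAfter_le fun _ => cntAddAfter_greedyAux_le r
  refine ⟨hstep, sum_nonpos fun j hj => ?_⟩
  obtain ⟨hj₁, hj₂⟩ := mem_Icc.mp hj
  obtain ⟨r, rfl⟩ : ∃ r : Fin s, j = r.val + 1 := ⟨⟨j - 1, by omega⟩, by simp only; omega⟩
  exact hstep r

theorem greedy_deg_nonpos (n ℓ : ℕ) (hn : 1 ≤ n) (hℓ : 1 ≤ ℓ) (s : ℕ)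
    (res mult : Fin s → ℕ) (hres : ∀ r, 1 ≤ res r)
    (hmult₁ : ∀ r, 1 ≤ mult r) (hmult₂ : ∀ r, mult r ≤ n)
    (hsucc : GreedySucceeds n ℓ res mult) :
    (∀ r : Fin s, degStep n ℓ (greedyTab n ℓ res mult) (r.val + 1) ≤ 0) ∧
    degBKW n ℓ s (greedyTab n ℓ res mult) ≤ 0 :=
  greedy_deg_nonpos_general n ℓ s res mult

end

end SlnWebGreedy
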